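/- arXiv:2303.14860 — 3 statements merged into one kernel-verified Lean document; each statement's English description precedes it below -/
import Mathlib

section
/- Let R be a continuous open surjection from a nonempty perfect locally compact Hausdorff space X onto itself, and let m, n ≥ 0. Then the set X_{m,n} = {(x,y) ∈ X × X : R^m(x) = R^n(y)} is nonempty, closed in X × X (hence locally compact), and perfect (has no isolated points), provided every point of X has a preimage under each iterate of R. -/
/-- For a continuous open surjection `R` on a nonempty perfect locally compact Hausdorff
space `X`, the set `X_{m,n} = {(x,y) | R^m x = R^n y}` is nonempty, closed, and perfect. -/
theorem stmt9 {X : Type*} [TopologicalSpace X] [T2Space X] [LocallyCompactSpace X]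
    [Nonempty X] (hX : Perfect (Set.univ : Set X))
    (R : X → X) (hc : Continuous R) (ho : IsOpenMap R) (hs : Function.Surjective R)
    (m n : ℕ) :
    {p : X × X | R^[m] p.1 = R^[n] p.2}.Nonempty ∧
    IsClosed {p : X × X | R^[m] p.1 = R^[n] p.2} ∧
    Perfect {p : X × X | R^[m] p.1 = R^[n] p.2} := by
  have hcm : Continuous (R^[m]) := hc.iterate m
  have hcn : Continuous (R^[n]) := hc.iterate n
  have hon : IsOpenMap (R^[n]) := by
    induction n with
    | zero => simpa using IsOpenMap.id
    | succ k ih => rw [Function.iterate_succ']; exact ho.comp (ih (hc.iterate k))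
  have hsn : Function.Surjective (R^[n]) := Function.Surjective.iterate hs n
  have hclosed : IsClosed {p : X × X | R^[m] p.1 = R^[n] p.2} :=
    isClosed_eq (hcm.comp continuous_fst) (hcn.comp continuous_snd)
  refine ⟨?_, hclosed, hclosed, ?_⟩
  · obtain ⟨x⟩ := ‹Nonempty X›
    obtain ⟨y, hy⟩ := hsn (R^[m] x)
    exact ⟨(x, y), hy.symm⟩
  · rintro ⟨x, y⟩ hxy
    rw [accPt_iff_nhds]
    intro U hU
    rw [mem_nhds_prod_iff] at hU
    obtain ⟨u, hu, v, hv, huv⟩ := hU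
    obtain ⟨V, hVv, hVopen, hyV⟩ := mem_nhds_iff.mp hv
    have himg : R^[n] '' V ∈ nhds (R^[m] x) := by
      have : IsOpen (R^[n] '' V) := hon V hVopen
      exact this.mem_nhds ⟨y, hyV, hxy.symm⟩
    have hU' : u ∩ (R^[m]) ⁻¹' (R^[n] '' V) ∈ nhds x :=
      Filter.inter_mem hu (hcm.continuousAt.preimage_mem_nhds himg)
    have hacc : AccPt x (Filter.principal (Set.univ : Set X)) :=
      hX.acc x (Set.mem_univ x)
    rw [accPt_iff_nhds] at hacc
    obtain ⟨x', ⟨hx'U, -⟩, hx'ne⟩ := hacc _ hU'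
    obtain ⟨y', hy'V, hy'⟩ := hx'U.2
    refine ⟨(x', y'), ⟨huv ⟨hx'U.1, hVv hy'V⟩, hy'.symm⟩, ?_⟩
    simp only [Prod.mk.injEq, ne_eq, not_and]
    intro h; exact absurd h hx'ne
end

section
/- Let R : X → X be a continuous open map on a topological space X, let 𝒳 ⊆ X be a dense completely invariant subset, and let m, n ≥ 0. Then 𝒳_{m,n} = {(x,y) ∈ 𝒳 × 𝒳 : R^m(x) = R^n(y)} is dense in X_{m,n} = {(x,y) ∈ X × X : R^m(x) = R^n(y)}. -/
/-- If `𝒳` is a dense completely invariant subset of `X` and `R` is a continuous open map,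
then `𝒳_{m,n}` is dense in `X_{m,n}`. -/
theorem stmt10 {X : Type*} [TopologicalSpace X] (R : X → X)
    (hc : Continuous R) (ho : IsOpenMap R)
    (𝒳 : Set X) (hdense : Dense 𝒳) (hpre : R ⁻¹' 𝒳 = 𝒳) (him : R '' 𝒳 = 𝒳)
    (m n : ℕ) :
    {p : X × X | R^[m] p.1 = R^[n] p.2} ⊆
      closure {p : X × X | p.1 ∈ 𝒳 ∧ p.2 ∈ 𝒳 ∧ R^[m] p.1 = R^[n] p.2} := by
  have hoIt : ∀ k : ℕ, IsOpenMap (R^[k]) := by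
    intro k
    induction k with
    | zero => simpa using IsOpenMap.id
    | succ k ih => rw [Function.iterate_succ']; exact ho.comp ih
  -- preimage invariance for iterates
  have hpreIt : ∀ k : ℕ, R^[k] ⁻¹' 𝒳 = 𝒳 := by
    intro k
    induction k with
    | zero => simp
    | succ k ih =>
      rw [Function.iterate_succ', Set.preimage_comp, hpre, ih]
  rintro ⟨x, y⟩ (hxy : R^[m] x = R^[n] y)
  rw [mem_closure_iff_nhds]
  intro t ht
  rw [nhds_prod_eq, Filter.mem_prod_iff] at ht
  obtain ⟨U, hU, V, hV, hUV⟩ := ht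
  obtain ⟨U', hU'U, hU'o, hxU'⟩ := mem_nhds_iff.mp hU
  obtain ⟨V', hV'V, hV'o, hyV'⟩ := mem_nhds_iff.mp hV
  -- W = U' ∩ (R^m)⁻¹ (R^n '' V') is open, contains x
  have hWo : IsOpen (U' ∩ R^[m] ⁻¹' (R^[n] '' V')) :=
    hU'o.inter ((hc.iterate m).isOpen_preimage _ (hoIt n V' hV'o))
  have hxW : x ∈ U' ∩ R^[m] ⁻¹' (R^[n] '' V') :=
    ⟨hxU', ⟨y, hyV', hxy.symm⟩⟩
  obtain ⟨x', hx'𝒳, hx'W⟩ := hdense.exists_mem_open hWo ⟨x, hxW⟩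
  obtain ⟨hx'U', y', hy'V', hy'eq⟩ := hx'W
  have hRx'𝒳 : R^[m] x' ∈ 𝒳 := by
    rw [← hpreIt m] at hx'𝒳; exact hx'𝒳
  have hy'𝒳 : y' ∈ 𝒳 := by
    rw [← hpreIt n, Set.mem_preimage, hy'eq]; exact hRx'𝒳
  exact ⟨(x', y'), hUV ⟨hU'U hx'U', hV'V hy'V'⟩, hx'𝒳, hy'𝒳, hy'eq.symm⟩
end

section
/- Let X be a set, R : X → X a map such that every point of X has exactly d_m preimages under R^m and exactly d_n preimages under R^n, and let f be a bounded function on X_{m,n} = {(x,y) : R^m(x) = R^n(y)}. Then there is a unique bounded operator α on ℓ²(X) whose (x,y)-entry equals f(x,y) for (x,y) ∈ X_{m,n} and 0 otherwise, and sup|f| ≤ ‖α‖ ≤ max(d_m, d_n) · sup|f|. -/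
/-! The operator is the kernel operator `(α g) x = ∑_{R^[n] y = R^[m] x} f (x, y) * g y`. Each row
of the kernel has `dn` entries and each column at most `dm`, so Cauchy–Schwarz along the rows and
counting along the columns (the Schur test) give `‖α g‖² ≤ dm * dn * (sup |f|)² * ‖g‖²`.
A bounded operator is determined by its values on the basis vectors, hence by its entries, and
each entry `⟪e_x, α e_y⟫` is bounded by `‖α‖`, which gives the lower bound. -/

noncomputable section
variable {X : Type*} [DecidableEq X]

def basisVec (x : X) : lp (fun _ : X => ℂ) 2 := lp.single 2 x 1

def entry (α : lp (fun _ : X => ℂ) 2 →L[ℂ] lp (fun _ : X => ℂ) 2) (x y : X) : ℂ :=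
  inner ℂ (basisVec x) (α (basisVec y))

open Finset

section

variable {ι : Type*} {E : ι → Type*} [∀ i, NormedAddCommGroup (E i)]

theorem lp.sum_norm_sq_le_norm_sq (g : lp E 2) (F : Finset ι) :
    ∑ i ∈ F, ‖g i‖ ^ 2 ≤ ‖g‖ ^ 2 := by
  simpa using lp.sum_rpow_le_norm_rpow (by norm_num) g F

theorem memℓp_two_of_forall_sum_sq_le {f : ∀ i, E i} {C : ℝ}
    (hf : ∀ F : Finset ι, ∑ i ∈ F, ‖f i‖ ^ 2 ≤ C) : Memℓp f 2 :=
  memℓp_gen' (C := C) (by simpa using hf)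

theorem lp.norm_le_of_forall_sum_sq_le {f : lp E 2} {C : ℝ} (hC : 0 ≤ C)
    (hf : ∀ F : Finset ι, ∑ i ∈ F, ‖f i‖ ^ 2 ≤ C ^ 2) : ‖f‖ ≤ C :=
  lp.norm_le_of_forall_sum_le (by norm_num) hC (by simpa using hf)

end

section KernelOperator

variable {𝕜 : Type*} [RCLike 𝕜] {ι : Type*}

theorem norm_sum_mul_sq_le (F : Finset ι) (k g : ι → 𝕜) {s : ℝ} (hk : ∀ y ∈ F, ‖k y‖ ≤ s) :
    ‖∑ y ∈ F, k y * g y‖ ^ 2 ≤ #F * s ^ 2 * ∑ y ∈ F, ‖g y‖ ^ 2 := calc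
  ‖∑ y ∈ F, k y * g y‖ ^ 2 ≤ (∑ y ∈ F, ‖k y‖ * ‖g y‖) ^ 2 := by
    gcongr
    exact (norm_sum_le _ _).trans_eq (by simp only [norm_mul])
  _ ≤ (∑ y ∈ F, ‖k y‖ ^ 2) * ∑ y ∈ F, ‖g y‖ ^ 2 := sum_mul_sq_le_sq_mul_sq _ _ _
  _ ≤ (∑ _y ∈ F, s ^ 2) * ∑ y ∈ F, ‖g y‖ ^ 2 := by
    gcongr with y hy
    exact hk y hy
  _ = #F * s ^ 2 * ∑ y ∈ F, ‖g y‖ ^ 2 := by rw [sum_const, nsmul_eq_mul]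

variable {S T : ι → Finset ι} {a b : ℕ}

theorem sum_sum_norm_sq_le_of_card_le (hST : ∀ x y, y ∈ S x ↔ x ∈ T y) (hT : ∀ y, #(T y) ≤ b)
    (g : lp (fun _ : ι => 𝕜) 2) (F : Finset ι) :
    ∑ x ∈ F, ∑ y ∈ S x, ‖g y‖ ^ 2 ≤ b * ‖g‖ ^ 2 := by
  classical
  calc ∑ x ∈ F, ∑ y ∈ S x, ‖g y‖ ^ 2
      = ∑ y ∈ F.biUnion S, ∑ _x ∈ F.filter (y ∈ S ·), ‖g y‖ ^ 2 :=
        sum_comm' fun x y => by simp only [mem_biUnion, mem_filter]; grind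
    _ ≤ ∑ y ∈ F.biUnion S, b * ‖g y‖ ^ 2 := by
        gcongr with y
        rw [sum_const, nsmul_eq_mul]
        gcongr
        refine le_trans (card_le_card fun x hx => ?_) (hT y)
        exact (hST x y).1 (mem_filter.1 hx).2
    _ ≤ b * ‖g‖ ^ 2 := by
        rw [← mul_sum]
        gcongr
        exact lp.sum_norm_sq_le_norm_sq g _

theorem exists_kernelOperator_norm_le (k : ι → ι → 𝕜) {s : ℝ} (hs : 0 ≤ s)
    (hST : ∀ x y, y ∈ S x ↔ x ∈ T y) (hS : ∀ x, #(S x) ≤ a) (hT : ∀ y, #(T y) ≤ b)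
    (hk : ∀ x, ∀ y ∈ S x, ‖k x y‖ ≤ s) :
    ∃ α : lp (fun _ : ι => 𝕜) 2 →L[𝕜] lp (fun _ : ι => 𝕜) 2,
      (∀ g x, α g x = ∑ y ∈ S x, k x y * g y) ∧ ‖α‖ ≤ √(a * b) * s := by
  set C := √(a * b) * s
  have hC : 0 ≤ C := by positivity
  have hsum (g : lp (fun _ : ι => 𝕜) 2) (F : Finset ι) :
      ∑ x ∈ F, ‖∑ y ∈ S x, k x y * g y‖ ^ 2 ≤ (C * ‖g‖) ^ 2 := calc
    _ ≤ ∑ x ∈ F, a * s ^ 2 * ∑ y ∈ S x, ‖g y‖ ^ 2 := by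
        gcongr with x
        refine (norm_sum_mul_sq_le _ _ _ (hk x)).trans ?_
        gcongr
        exact hS x
    _ ≤ a * s ^ 2 * (b * ‖g‖ ^ 2) := by
        rw [← mul_sum]
        gcongr
        exact sum_sum_norm_sq_le_of_card_le hST hT g F
    _ = (C * ‖g‖) ^ 2 := by
        rw [mul_pow, mul_pow, Real.sq_sqrt (by positivity)]
        ring
  let L : lp (fun _ : ι => 𝕜) 2 →ₗ[𝕜] lp (fun _ : ι => 𝕜) 2 :=
    { toFun g := ⟨fun x => ∑ y ∈ S x, k x y * g y, memℓp_two_of_forall_sum_sq_le (hsum g)⟩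
      map_add' g h := lp.ext <| funext fun x => by
        simp only [lp.coeFn_add, Pi.add_apply, mul_add, sum_add_distrib]
      map_smul' c g := lp.ext <| funext fun x => by
        simp [mul_sum, mul_left_comm] }
  have hL (g : lp (fun _ : ι => 𝕜) 2) : ‖L g‖ ≤ C * ‖g‖ :=
    lp.norm_le_of_forall_sum_sq_le (by positivity) (hsum g)
  exact ⟨L.mkContinuous C hL, fun g x => rfl, L.mkContinuous_norm_le hC hL⟩

theorem apply_single_one_of_eq_sum [DecidableEq ι] {k : ι → ι → 𝕜}
    {α : lp (fun _ : ι => 𝕜) 2 →L[𝕜] lp (fun _ : ι => 𝕜) 2}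
    (hα : ∀ g x, α g x = ∑ y ∈ S x, k x y * g y) (x y : ι) :
    α (lp.single 2 y 1) x = if y ∈ S x then k x y else 0 := by
  simp [hα, Pi.single_apply]

end KernelOperator

section Entry

variable (γ : lp (fun _ : X => ℂ) 2 →L[ℂ] lp (fun _ : X => ℂ) 2)

theorem entry_eq_apply (x y : X) : entry γ x y = γ (basisVec y) x := by
  simp [entry, basisVec, lp.inner_single_left]

theorem norm_entry_le (x y : X) : ‖entry γ x y‖ ≤ ‖γ‖ := by
  have h (z : X) : ‖basisVec z‖ = 1 := by simp [basisVec, lp.norm_single]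
  calc ‖entry γ x y‖ ≤ ‖basisVec x‖ * ‖γ (basisVec y)‖ := norm_inner_le_norm _ _
    _ ≤ ‖γ‖ := by simpa [h] using γ.le_opNorm (basisVec y)

theorem ext_entry {β : lp (fun _ : X => ℂ) 2 →L[ℂ] lp (fun _ : X => ℂ) 2}
    (h : ∀ x y, entry β x y = entry γ x y) : β = γ := by
  refine lp.ext_continuousLinearMap ENNReal.ofNat_ne_top fun y => ?_
  refine ContinuousLinearMap.ext_ring <| lp.ext <| funext fun x => ?_
  simpa [entry_eq_apply, basisVec] using h x y

end Entry

/-- If every point has exactly `dm` preimages under `R^m` and `dn` preimages under `R^n`, and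
`f` is a bounded function on `X_{m,n}`, then there is a unique bounded operator on `ℓ²(X)`
whose `(x,y)`-entry is `f (x,y)` for `(x,y) ∈ X_{m,n}` and `0` otherwise, and its norm lies
between `sup |f|` and `max dm dn * sup |f|`. -/
theorem stmt14 (R : X → X) (m n dm dn : ℕ)
    (hm : ∀ z : X, {x : X | R^[m] x = z}.Finite ∧ {x : X | R^[m] x = z}.ncard = dm)
    (hn : ∀ z : X, {x : X | R^[n] x = z}.Finite ∧ {x : X | R^[n] x = z}.ncard = dn)
    (f : X × X → ℂ)
    (hbdd : BddAbove {r : ℝ | ∃ p : X × X, R^[m] p.1 = R^[n] p.2 ∧ r = ‖f p‖}) :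
    ∃ α : lp (fun _ : X => ℂ) 2 →L[ℂ] lp (fun _ : X => ℂ) 2,
      (∀ x y : X, entry α x y = if R^[m] x = R^[n] y then f (x, y) else 0) ∧
      (∀ β : lp (fun _ : X => ℂ) 2 →L[ℂ] lp (fun _ : X => ℂ) 2,
        (∀ x y : X, entry β x y = if R^[m] x = R^[n] y then f (x, y) else 0) → β = α) ∧
      sSup {r : ℝ | ∃ p : X × X, R^[m] p.1 = R^[n] p.2 ∧ r = ‖f p‖} ≤ ‖α‖ ∧
      ‖α‖ ≤ (max dm dn : ℕ) *
        sSup {r : ℝ | ∃ p : X × X, R^[m] p.1 = R^[n] p.2 ∧ r = ‖f p‖} := by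
  set s := sSup {r : ℝ | ∃ p : X × X, R^[m] p.1 = R^[n] p.2 ∧ r = ‖f p‖}
  have hs : 0 ≤ s := Real.sSup_nonneg (by rintro r ⟨p, -, rfl⟩; positivity)
  have hf (x y : X) (h : R^[m] x = R^[n] y) : ‖f (x, y)‖ ≤ s := le_csSup hbdd ⟨(x, y), h, rfl⟩
  obtain ⟨α, hα, hnorm⟩ := exists_kernelOperator_norm_le (fun x y => f (x, y)) hs
    (S := fun x => (hn (R^[m] x)).1.toFinset) (T := fun y => (hm (R^[n] y)).1.toFinset)
    (fun x y => by simp [eq_comm])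
    (fun x => by rw [← Set.ncard_eq_toFinset_card _ (hn _).1, (hn _).2])
    (fun y => by rw [← Set.ncard_eq_toFinset_card _ (hm _).1, (hm _).2])
    (fun x y hy => hf x y (by simpa [eq_comm] using hy))
  have hentry (x y : X) : entry α x y = if R^[m] x = R^[n] y then f (x, y) else 0 := by
    simp [entry_eq_apply, basisVec, apply_single_one_of_eq_sum hα, eq_comm]
  refine ⟨α, hentry, fun β hβ => ext_entry α fun x y => (hβ x y).trans (hentry x y).symm,
    Real.sSup_le ?_ (norm_nonneg α), hnorm.trans ?_⟩
  · rintro r ⟨⟨x, y⟩, h, rfl⟩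
    simpa [hentry, h] using norm_entry_le α x y
  · have hgeom : √((dn : ℝ) * dm) ≤ (max dm dn : ℕ) := by
      rw [Real.sqrt_le_left (by positivity)]
      push_cast
      nlinarith [le_max_left (dm : ℝ) dn, le_max_right (dm : ℝ) dn]
    gcongr
end
end
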